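/- Let A be a complete normed unital algebra (Banach algebra) with submultiplicative norm and ‖1‖ = 1, C > 0, and let (a_{r,s})_{0 ≤ r ≤ s} be a family of elements of A such that ‖a_{r,s}‖ ≤ (s − r)·C for all r ≤ s and a_{r,t} = a_{r,s} + a_{s,t} whenever r < s < t. Set g_{r,s} := 1 + a_{r,s} and let U_{r,s} denote the limit of the net of ordered products Θ_α over partitions α of [r,s]. Fix 0 ≤ R < S and, for a partition α = {R = t₁ < … < t_{n+1} = S} of [R,S], define Υ_α := (1 − n)·1 + ∑_{j=1}^{n} U_{t_j,t_{j+1}}. Then the net (Υ_α)_{α ∈ P[R,S]}, indexed by the partitions of [R,S] ordered by inclusion, converges in norm to g_{R,S} = 1 + a_{R,S}. -/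

import Mathlib

/-!
For a partition `r = t₁ < ⋯ < t_{n+1} = s`, expanding `∏ (1 + a_{t_j,t_{j+1}})` shows that it
differs from `1 + ∑ a_{t_j,t_{j+1}} = 1 + a_{r,s}` by at most `e^σ - 1 - σ ≤ σ²`, where
`σ = ∑ ‖a_{t_j,t_{j+1}}‖ ≤ (s - r) C`. Passing to the limit, `‖U_{r,s} - g_{r,s}‖ ≤ ((s - r) C)²`.
By additivity `∑ g_{t_j,t_{j+1}} = n • 1 + a_{R,S}`, so `Υ_α - g_{R,S} = ∑ (U - g)_{t_j,t_{j+1}}`,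
of norm at most `C² (mesh α) (S - R)`; every refinement of a fine uniform grid has small mesh.
-/

/-- A partition of the interval `[R, S]`: a finite set of reals containing `R` and `S`
all of whose elements lie in `[R, S]`. -/
def IsPartition (R S : ℝ) (α : Finset ℝ) : Prop :=
  R ∈ α ∧ S ∈ α ∧ ∀ t ∈ α, R ≤ t ∧ t ≤ S

/-- The list of consecutive pairs `(t₁,t₂), (t₂,t₃), …` of the elements of a finite set
of reals, sorted increasingly. -/
noncomputable def consecPairs (α : Finset ℝ) : List (ℝ × ℝ) :=
  (α.sort (· ≤ ·)).zip (α.sort (· ≤ ·)).tail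

/-- The ordered product `g t₁ t₂ * g t₂ t₃ * ⋯ * g tₙ tₙ₊₁` over the consecutive points
`t₁ < t₂ < … < tₙ₊₁` of a partition, taken in increasing order. -/
noncomputable def partitionProd {A : Type*} [Ring A] (g : ℝ → ℝ → A) (α : Finset ℝ) : A :=
  ((consecPairs α).map fun p => g p.1 p.2).prod

/-- The sum `U t₁ t₂ + U t₂ t₃ + ⋯ + U tₙ tₙ₊₁` over the consecutive points of a
partition. -/
noncomputable def partitionSum {A : Type*} [Ring A] (U : ℝ → ℝ → A) (α : Finset ℝ) : A :=
  ((consecPairs α).map fun p => U p.1 p.2).sum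

/-- The mesh `max_i (t_{i+1} - t_i)` of a partition. -/
noncomputable def mesh (α : Finset ℝ) : ℝ :=
  ((consecPairs α).map fun p => p.2 - p.1).foldr max 0

/-- `IsNetLimit g r s u` means that the net `α ↦ partitionProd g α`, indexed by the
partitions of `[r, s]` partially ordered by inclusion, converges to `u`. -/
def IsNetLimit {A : Type*} [NormedRing A] (g : ℝ → ℝ → A) (r s : ℝ) (u : A) : Prop :=
  ∀ ε > 0, ∃ γ : Finset ℝ, IsPartition r s γ ∧
    ∀ α : Finset ℝ, IsPartition r s α → γ ⊆ α → ‖partitionProd g α - u‖ < ε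

namespace List

theorem norm_prod_map_one_add_sub_le {A : Type*} [NormedRing A] [NormOneClass A] (l : List A) :
    ‖(l.map (1 + ·)).prod - (1 + l.sum)‖ ≤
      Real.exp (l.map norm).sum - 1 - (l.map norm).sum := by
  induction l with
  | nil => simp
  | cons x l ih =>
    set σ := (l.map norm).sum
    have hσ : 0 ≤ σ := sum_nonneg (by simp)
    have hsum : ‖l.sum‖ ≤ σ := l.le_sum_of_subadditive norm norm_zero.le norm_add_le
    have hx : ‖1 + x‖ ≤ 1 + ‖x‖ := (norm_add_le _ _).trans_eq (by rw [norm_one])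
    have hexp : Real.exp (‖x‖ + σ) = Real.exp ‖x‖ * Real.exp σ := Real.exp_add _ _
    calc ‖(1 + x) * (l.map (1 + ·)).prod - (1 + (x + l.sum))‖
        = ‖(1 + x) * ((l.map (1 + ·)).prod - (1 + l.sum)) + x * l.sum‖ := by
          congr 1; noncomm_ring
      _ ≤ (1 + ‖x‖) * (Real.exp σ - 1 - σ) + ‖x‖ * σ := by
          refine (norm_add_le _ _).trans (add_le_add ?_ ?_)
          · exact (norm_mul_le _ _).trans (mul_le_mul hx ih (norm_nonneg _) (by positivity))
          · exact (norm_mul_le _ _).trans (by gcongr)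
      _ ≤ Real.exp (‖x‖ + σ) - 1 - (‖x‖ + σ) := by
          rw [hexp]
          nlinarith [Real.add_one_le_exp ‖x‖, Real.add_one_le_exp σ, Real.exp_pos σ]
      _ = _ := by simp [σ]

theorem sum_map_zip_tail_sub {α G : Type*} [AddCommGroup G] (φ : α → G) (x : α) (L : List α) :
    (((x :: L).zip L).map fun p => φ p.2 - φ p.1).sum =
      φ ((x :: L).getLast (cons_ne_nil x L)) - φ x := by
  induction L generalizing x with
  | nil => simp
  | cons y L ih =>
    rw [zip_cons_cons, map_cons, sum_cons, ih, getLast_cons (cons_ne_nil y L)]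
    abel

theorem Pairwise.lt_and_notMem_Ioo_of_mem_zip_tail {α : Type*} [Preorder α] {L : List α}
    (hL : L.Pairwise (· < ·)) {p : α × α} (hp : p ∈ L.zip L.tail) :
    p.1 < p.2 ∧ ∀ t ∈ L, t ∉ Set.Ioo p.1 p.2 := by
  induction L with
  | nil => simp at hp
  | cons x M ih =>
    obtain _ | ⟨y, N⟩ := M
    · simp at hp
    obtain ⟨hx, hM⟩ := pairwise_cons.mp hL
    rcases mem_cons.mp hp with rfl | hp
    · refine ⟨hx y mem_cons_self, fun t ht ⟨hxt, hty⟩ => ?_⟩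
      rcases mem_cons.mp ht with rfl | ht
      · exact lt_irrefl _ hxt
      rcases mem_cons.mp ht with rfl | ht
      · exact lt_irrefl _ hty
      exact lt_asymm hty ((pairwise_cons.mp hM).1 t ht)
    · obtain ⟨hlt, hIoo⟩ := ih hM hp
      refine ⟨hlt, fun t ht => ?_⟩
      rcases mem_cons.mp ht with htx | ht
      · exact htx ▸ fun h => lt_asymm h.1 (hx _ (of_mem_zip hp).1)
      · exact hIoo t ht

end List

section Partition

variable {R S : ℝ} {α : Finset ℝ} {p : ℝ × ℝ}

theorem IsPartition.exists_sort_eq (h : IsPartition R S α) :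
    ∃ L, α.sort (· ≤ ·) = R :: L ∧ (R :: L).getLast (List.cons_ne_nil R L) = S := by
  have hsort : (α.sort (· ≤ ·)).Pairwise (· ≤ ·) := Finset.pairwise_sort _ _
  obtain ⟨x, L, hxL⟩ := List.exists_cons_of_ne_nil
    (List.ne_nil_of_mem ((Finset.mem_sort (· ≤ ·)).2 h.1))
  have hmem : ∀ t, t ∈ x :: L ↔ t ∈ α := fun t => hxL ▸ Finset.mem_sort _
  rw [hxL] at hsort
  obtain rfl : x = R :=
    le_antisymm (hsort.rel_head ((hmem R).2 h.1)) (h.2.2 x ((hmem x).1 List.mem_cons_self)).1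
  exact ⟨L, hxL, le_antisymm (h.2.2 _ ((hmem _).1 (List.getLast_mem _))).2
    (hsort.rel_getLast ((hmem S).2 h.2.1))⟩

theorem IsPartition.sum_consecPairs_sub {G : Type*} [AddCommGroup G] (h : IsPartition R S α)
    (φ : ℝ → G) : ((consecPairs α).map fun p => φ p.2 - φ p.1).sum = φ S - φ R := by
  obtain ⟨L, hL, hlast⟩ := h.exists_sort_eq
  rw [consecPairs, hL, List.tail_cons, List.sum_map_zip_tail_sub, hlast]

theorem length_consecPairs (α : Finset ℝ) : (consecPairs α).length = α.card - 1 := by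
  simp [consecPairs]

theorem fst_mem_of_mem_consecPairs (hp : p ∈ consecPairs α) : p.1 ∈ α :=
  (Finset.mem_sort (· ≤ ·)).1 (List.of_mem_zip hp).1

theorem snd_mem_of_mem_consecPairs (hp : p ∈ consecPairs α) : p.2 ∈ α :=
  (Finset.mem_sort (· ≤ ·)).1 (List.mem_of_mem_tail (List.of_mem_zip hp).2)

theorem fst_lt_snd_of_mem_consecPairs (hp : p ∈ consecPairs α) : p.1 < p.2 :=
  ((Finset.sortedLT_sort α).pairwise.lt_and_notMem_Ioo_of_mem_zip_tail hp).1

theorem notMem_Ioo_of_mem_consecPairs (hp : p ∈ consecPairs α) {t : ℝ} (ht : t ∈ α) :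
    t ∉ Set.Ioo p.1 p.2 :=
  ((Finset.sortedLT_sort α).pairwise.lt_and_notMem_Ioo_of_mem_zip_tail hp).2 t
    ((Finset.mem_sort _).2 ht)

theorem exists_add_nat_mul_mem_Ioo {u v d : ℝ} (hd : 0 < d) (hRu : R ≤ u) (huv : u + d < v) :
    ∃ k : ℕ, R + k * d ∈ Set.Ioo u v := by
  set m := ⌊(u - R) / d⌋₊
  have hm : (m : ℝ) * d ≤ u - R := (le_div_iff₀ hd).1 (Nat.floor_le (by positivity))
  have hm' : u - R < (m + 1) * d := (div_lt_iff₀ hd).1 (Nat.lt_floor_add_one _)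
  exact ⟨m + 1, by push_cast; constructor <;> nlinarith⟩

theorem exists_partition_forall_consecPairs_sub_le {δ : ℝ} (hRS : R < S) (hδ : 0 < δ) :
    ∃ γ, IsPartition R S γ ∧ ∀ α, IsPartition R S α → γ ⊆ α →
      ∀ p ∈ consecPairs α, p.2 - p.1 ≤ δ := by
  obtain ⟨n, hn⟩ := exists_nat_gt ((S - R) / δ)
  have hn0 : (0 : ℝ) < n := lt_trans (by have := sub_pos.2 hRS; positivity) hn
  set d := (S - R) / n
  have hd : 0 < d := div_pos (sub_pos.2 hRS) hn0
  have hdδ : d < δ := by rw [div_lt_iff₀ hδ] at hn; rwa [div_lt_iff₀ hn0, mul_comm]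
  have hS : R + n * d = S := by rw [mul_div_cancel₀ _ hn0.ne']; ring
  refine ⟨(Finset.range (n + 1)).image fun k : ℕ => R + k * d, ⟨?_, ?_, ?_⟩, ?_⟩
  · exact Finset.mem_image.2 ⟨0, by simp⟩
  · exact Finset.mem_image.2 ⟨n, by simpa using hS⟩
  · simp only [Finset.mem_image, Finset.mem_range]
    rintro _ ⟨k, hk, rfl⟩
    have hkn : (k : ℝ) ≤ n := by exact_mod_cast Nat.lt_succ_iff.1 hk
    constructor <;> nlinarith
  · intro α hα hγα p hp
    by_contra! hgap
    obtain ⟨k, hk⟩ := exists_add_nat_mul_mem_Ioo (v := p.2) hd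
      (hα.2.2 _ (fst_mem_of_mem_consecPairs hp)).1 (by linarith)
    have hkn : k < n + 1 := by
      have hpS := (hα.2.2 _ (snd_mem_of_mem_consecPairs hp)).2
      have hk' : (k : ℝ) < n := lt_of_mul_lt_mul_right (by linarith [hk.2]) hd.le
      exact_mod_cast hk'.trans (lt_add_one _)
    exact notMem_Ioo_of_mem_consecPairs hp
      (hγα (Finset.mem_image.2 ⟨k, Finset.mem_range.2 hkn, rfl⟩)) hk

end Partition

section Evolution

variable {A : Type*} [NormedRing A] {C : ℝ} {a : ℝ → ℝ → A} {R S r s : ℝ} {α : Finset ℝ}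

theorem IsPartition.sum_consecPairs_eq (ha_norm : ∀ r s, 0 ≤ r → r ≤ s → ‖a r s‖ ≤ (s - r) * C)
    (ha_add : ∀ r s t, 0 ≤ r → r < s → s < t → a r t = a r s + a s t)
    (hR : 0 ≤ R) (hα : IsPartition R S α) :
    ((consecPairs α).map fun p => a p.1 p.2).sum = a R S := by
  have haRR : a R R = 0 := norm_le_zero_iff.1 (by simpa using ha_norm R R hR le_rfl)
  calc ((consecPairs α).map fun p => a p.1 p.2).sum
      = ((consecPairs α).map fun p => a R p.2 - a R p.1).sum := by
        refine congrArg List.sum (List.map_congr_left fun p hp => ?_)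
        have hlt := fst_lt_snd_of_mem_consecPairs hp
        rcases (hα.2.2 _ (fst_mem_of_mem_consecPairs hp)).1.eq_or_lt with hRp | hRp
        · rw [← hRp, haRR, sub_zero]
        · rw [ha_add R p.1 p.2 hR hRp hlt, add_sub_cancel_left]
    _ = a R S := by rw [hα.sum_consecPairs_sub (a R), haRR, sub_zero]

theorem IsPartition.smul_one_add_partitionSum_sub_eq (U : ℝ → ℝ → A) (hα : IsPartition R S α)
    (hsum : ((consecPairs α).map fun p => a p.1 p.2).sum = a R S) :
    ((1 - ((α.card : ℤ) - 1)) • (1 : A) + partitionSum U α) - (1 + a R S) =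
      ((consecPairs α).map fun p => U p.1 p.2 - (1 + a p.1 p.2)).sum := by
  have hU : ((consecPairs α).map fun p => U p.1 p.2 - (1 + a p.1 p.2)).sum +
      ((consecPairs α).map fun p => 1 + a p.1 p.2).sum = partitionSum U α := by
    rw [← List.sum_map_add]; simp only [sub_add_cancel]; rfl
  have hcard : 1 ≤ α.card := Finset.card_pos.2 ⟨R, hα.1⟩
  rw [← hU, List.sum_map_add, hsum, List.map_const', List.sum_replicate, length_consecPairs,
    ← Nat.cast_smul_eq_nsmul ℤ, Nat.cast_sub hcard]
  simp only [sub_smul, Nat.cast_one, one_smul]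
  abel

theorem norm_sub_le_of_isNetLimit {g : ℝ → ℝ → A} {u x : A} {B : ℝ} (hu : IsNetLimit g r s u)
    (hB : ∀ α, IsPartition r s α → ‖partitionProd g α - x‖ ≤ B) : ‖u - x‖ ≤ B := by
  refine le_of_forall_pos_lt_add fun ε hε => ?_
  obtain ⟨γ, hγ, hlim⟩ := hu ε hε
  calc ‖u - x‖ ≤ ‖partitionProd g γ - x‖ + ‖partitionProd g γ - u‖ := by
        rw [add_comm, norm_sub_rev _ u]; exact norm_sub_le_norm_sub_add_norm_sub _ _ _
    _ < B + ε := add_lt_add_of_le_of_lt (hB γ hγ) (hlim γ hγ subset_rfl)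

variable [NormOneClass A]

theorem norm_partitionProd_one_add_sub_le
    (ha_norm : ∀ r s, 0 ≤ r → r ≤ s → ‖a r s‖ ≤ (s - r) * C)
    (ha_add : ∀ r s t, 0 ≤ r → r < s → s < t → a r t = a r s + a s t)
    (hr : 0 ≤ r) (hα : IsPartition r s α) (hsmall : (s - r) * C ≤ 1) :
    ‖partitionProd (fun p q => 1 + a p q) α - (1 + a r s)‖ ≤ ((s - r) * C) ^ 2 := by
  set l := (consecPairs α).map fun p => a p.1 p.2
  set σ := (l.map norm).sum
  have hσ0 : 0 ≤ σ := List.sum_nonneg (by simp)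
  have hσ : σ ≤ (s - r) * C := calc
    σ = ((consecPairs α).map fun p => ‖a p.1 p.2‖).sum := by simp only [σ, l, List.map_map]; rfl
    _ ≤ ((consecPairs α).map fun p => p.2 * C - p.1 * C).sum := by
        refine List.sum_le_sum fun p hp => ?_
        rw [← sub_mul]
        exact ha_norm _ _ (hr.trans (hα.2.2 _ (fst_mem_of_mem_consecPairs hp)).1)
          (fst_lt_snd_of_mem_consecPairs hp).le
    _ = (s - r) * C := by rw [hα.sum_consecPairs_sub (· * C), sub_mul]
  calc ‖partitionProd (fun p q => 1 + a p q) α - (1 + a r s)‖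
      = ‖(l.map (1 + ·)).prod - (1 + l.sum)‖ := by
        rw [hα.sum_consecPairs_eq ha_norm ha_add hr, partitionProd, List.map_map]; rfl
    _ ≤ Real.exp σ - 1 - σ := l.norm_prod_map_one_add_sub_le
    _ ≤ σ ^ 2 := (le_abs_self _).trans
        (Real.abs_exp_sub_one_sub_id_le (by rw [abs_of_nonneg hσ0]; linarith))
    _ ≤ ((s - r) * C) ^ 2 := pow_le_pow_left₀ hσ0 hσ 2

theorem norm_smul_one_add_partitionSum_sub_le (hC : 0 ≤ C)
    (ha_norm : ∀ r s, 0 ≤ r → r ≤ s → ‖a r s‖ ≤ (s - r) * C)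
    (ha_add : ∀ r s t, 0 ≤ r → r < s → s < t → a r t = a r s + a s t)
    {U : ℝ → ℝ → A}
    (hU : ∀ r s, 0 ≤ r → r < s → IsNetLimit (fun p q => (1 : A) + a p q) r s (U r s))
    {δ : ℝ} (hδ : δ * C ≤ 1) (hR : 0 ≤ R) (hα : IsPartition R S α)
    (hgap : ∀ p ∈ consecPairs α, p.2 - p.1 ≤ δ) :
    ‖((1 - ((α.card : ℤ) - 1)) • (1 : A) + partitionSum U α) - (1 + a R S)‖ ≤
      C ^ 2 * δ * (S - R) := by
  rw [hα.smul_one_add_partitionSum_sub_eq U (hα.sum_consecPairs_eq ha_norm ha_add hR)]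
  calc _ ≤ ((consecPairs α).map fun p => ‖U p.1 p.2 - (1 + a p.1 p.2)‖).sum := by
        refine (List.le_sum_of_subadditive norm norm_zero.le norm_add_le _).trans_eq ?_
        rw [List.map_map]; rfl
    _ ≤ ((consecPairs α).map fun p => C ^ 2 * δ * p.2 - C ^ 2 * δ * p.1).sum := by
        refine List.sum_le_sum fun p hp => ?_
        have hp1 : 0 ≤ p.1 := hR.trans (hα.2.2 _ (fst_mem_of_mem_consecPairs hp)).1
        have hlt := fst_lt_snd_of_mem_consecPairs hp
        have hsmall : (p.2 - p.1) * C ≤ 1 := (mul_le_mul_of_nonneg_right (hgap p hp) hC).trans hδ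
        calc ‖U p.1 p.2 - (1 + a p.1 p.2)‖ ≤ ((p.2 - p.1) * C) ^ 2 :=
              norm_sub_le_of_isNetLimit (hU _ _ hp1 hlt) fun β hβ =>
                norm_partitionProd_one_add_sub_le ha_norm ha_add hp1 hβ hsmall
          _ = C ^ 2 * (p.2 - p.1) * (p.2 - p.1) := by ring
          _ ≤ C ^ 2 * δ * (p.2 - p.1) := by gcongr; exact hgap p hp
          _ = C ^ 2 * δ * p.2 - C ^ 2 * δ * p.1 := by ring
    _ = C ^ 2 * δ * (S - R) := by rw [hα.sum_consecPairs_sub (C ^ 2 * δ * ·), mul_sub]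

end Evolution

theorem stmt_12_general {A : Type*} [NormedRing A] [NormOneClass A]
    (C : ℝ) (hC : 0 < C)
    (a : ℝ → ℝ → A)
    (ha_norm : ∀ r s, 0 ≤ r → r ≤ s → ‖a r s‖ ≤ (s - r) * C)
    (ha_add : ∀ r s t, 0 ≤ r → r < s → s < t → a r t = a r s + a s t)
    (U : ℝ → ℝ → A)
    (hU : ∀ r s, 0 ≤ r → r < s → IsNetLimit (fun p q => (1 : A) + a p q) r s (U r s))
    (R S : ℝ) (hR : 0 ≤ R) (hRS : R < S) :
    ∀ ε > 0, ∃ γ : Finset ℝ, IsPartition R S γ ∧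
      ∀ α : Finset ℝ, IsPartition R S α → γ ⊆ α →
        ‖((1 - ((α.card : ℤ) - 1)) • (1 : A) + partitionSum U α) - (1 + a R S)‖ < ε := by
  intro ε hε
  have hSR : 0 < S - R := sub_pos.2 hRS
  set δ := min C⁻¹ (ε / (2 * C ^ 2 * (S - R)))
  have hδ : 0 < δ := lt_min (inv_pos.2 hC) (by positivity)
  have hδC : δ * C ≤ 1 := (mul_le_mul_of_nonneg_right (min_le_left _ _) hC.le).trans_eq
    (inv_mul_cancel₀ hC.ne')
  obtain ⟨γ, hγ, hfine⟩ := exists_partition_forall_consecPairs_sub_le hRS hδ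
  refine ⟨γ, hγ, fun α hα hγα => ?_⟩
  calc _ ≤ C ^ 2 * δ * (S - R) := norm_smul_one_add_partitionSum_sub_le hC.le ha_norm ha_add hU
        hδC hR hα (hfine α hα hγα)
    _ ≤ C ^ 2 * (ε / (2 * C ^ 2 * (S - R))) * (S - R) := by gcongr; exact min_le_right _ _
    _ < ε := by field_simp; linarith

/-- for a partition `α = {R = t₁ < … < t_{n+1} = S}`, the net
`Υ_α := (1 - n)·1 + ∑_{j=1}^{n} U_{t_j,t_{j+1}}` over partitions of `[R, S]` ordered
by inclusion converges in norm to `g_{R,S} = 1 + a_{R,S}`. -/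
theorem stmt_12 {A : Type*} [NormedRing A] [NormOneClass A] [NormedAlgebra ℂ A]
    [CompleteSpace A]
    (C : ℝ) (hC : 0 < C)
    (a : ℝ → ℝ → A)
    (ha_norm : ∀ r s, 0 ≤ r → r ≤ s → ‖a r s‖ ≤ (s - r) * C)
    (ha_add : ∀ r s t, 0 ≤ r → r < s → s < t → a r t = a r s + a s t)
    (U : ℝ → ℝ → A)
    (hU : ∀ r s, 0 ≤ r → r < s → IsNetLimit (fun p q => (1 : A) + a p q) r s (U r s))
    (R S : ℝ) (hR : 0 ≤ R) (hRS : R < S) :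
    ∀ ε > 0, ∃ γ : Finset ℝ, IsPartition R S γ ∧
      ∀ α : Finset ℝ, IsPartition R S α → γ ⊆ α →
        ‖((1 - ((α.card : ℤ) - 1)) • (1 : A) + partitionSum U α) - (1 + a R S)‖ < ε :=
  stmt_12_general C hC a ha_norm ha_add U hU R S hR hRS
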